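/- In the ideal triangle T of the hyperbolic upper half-plane with vertices 0, 1 and ∞, the non-foliated region — the subset of T bounded by the three pairwise tangent horocycles, namely N = T ∩ {z : Im z ≤ 1} ∩ {z : |z − i/2| ≥ 1/2} ∩ {z : |z − 1 − i/2| ≥ 1/2} — has hyperbolic area π − 3. Equivalently, the foliated part of the ideal triangle T (the union of its three spikes, each bounded by a horocyclic arc of length 1) has hyperbolic area 3. -/

import Mathlib

open MeasureTheory

/-- The ideal triangle of `ℍ` with vertices `0`, `1`, `∞`. -/
def idealTriangle : Set ℂ :=
  {z : ℂ | 0 ≤ z.re ∧ z.re ≤ 1 ∧ 0 < z.im ∧ (1/2 : ℝ) ≤ ‖z - 1/2‖}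

/-- The non-foliated region of the ideal triangle `T` with vertices `0`, `1`,
`∞`: the subset of `T` bounded by the three pairwise tangent horocycles
`H_∞ = {Im z = 1}`, `H_0 = {|z - i/2| = 1/2}`, `H_1 = {|z - 1 - i/2| = 1/2}`. -/
def nonFoliatedRegion : Set ℂ :=
  idealTriangle ∩ {z : ℂ | z.im ≤ 1} ∩
    {z : ℂ | (1/2 : ℝ) ≤ ‖z - Complex.I / 2‖} ∩
    {z : ℂ | (1/2 : ℝ) ≤ ‖z - 1 - Complex.I / 2‖}

open Set intervalIntegral Real
open scoped Interval


noncomputable def yplus (t : ℝ) : ℝ := (1 + Real.sqrt (1 - 4*t^2)) / 2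
noncomputable def Yfun (x : ℝ) : ℝ := max (yplus x) (yplus (1-x))
noncomputable def gfun (x : ℝ) : ℝ := Real.sqrt (x - x^2)

lemma yplus_half_le (t : ℝ) : (1/2 : ℝ) ≤ yplus t := by
  have := Real.sqrt_nonneg (1 - 4*t^2)
  unfold yplus; linarith

lemma yplus_le_one (t : ℝ) : yplus t ≤ 1 := by
  have h : Real.sqrt (1 - 4*t^2) ≤ 1 := by
    calc Real.sqrt (1 - 4*t^2) ≤ Real.sqrt 1 := Real.sqrt_le_sqrt (by nlinarith)
    _ = 1 := Real.sqrt_one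
  unfold yplus; linarith

lemma Yfun_half_le (x : ℝ) : (1/2 : ℝ) ≤ Yfun x := le_trans (yplus_half_le x) (le_max_left _ _)
lemma Yfun_le_one (x : ℝ) : Yfun x ≤ 1 := max_le (yplus_le_one x) (yplus_le_one _)
lemma Yfun_pos (x : ℝ) : 0 < Yfun x := lt_of_lt_of_le (by norm_num) (Yfun_half_le x)

lemma Yfun_symm (x : ℝ) : Yfun (1 - x) = Yfun x := by
  unfold Yfun; rw [show 1 - (1-x) = x by ring, max_comm]

lemma Yfun_eq_of_le_half {x : ℝ} (hx : x ≤ 1/2) : Yfun x = yplus x := by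
  have h1 : yplus (1 - x) = 1/2 := by
    unfold yplus
    rw [Real.sqrt_eq_zero'.mpr (by nlinarith)]
    norm_num
  rw [Yfun, h1]
  exact max_eq_left (yplus_half_le x)

lemma gfun_le_half {x : ℝ} : gfun x ≤ 1/2 := by
  calc gfun x ≤ Real.sqrt (1/4) := Real.sqrt_le_sqrt (by nlinarith [sq_nonneg (2*x-1)])
  _ = 1/2 := by
      rw [show (1/4 : ℝ) = (1/2)^2 by norm_num, Real.sqrt_sq (by norm_num)]

lemma gfun_pos {x : ℝ} (h0 : 0 < x) (h1 : x < 1) : 0 < gfun x :=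
  Real.sqrt_pos.mpr (by nlinarith)

lemma gfun_le_Yfun (x : ℝ) : gfun x ≤ Yfun x := le_trans gfun_le_half (Yfun_half_le x)

-- key sublemma
lemma yplus_le_aux {t y : ℝ} (ht : 0 < t) (ht2 : t ≤ 1/2) (hy : 0 < y) (hy1 : y ≤ 1)
    (hg : t - t^2 ≤ y^2) (hh : y ≤ t^2 + y^2) : yplus t ≤ y := by
  have hd0 : (0:ℝ) ≤ 1 - 4*t^2 := by nlinarith
  set d := Real.sqrt (1 - 4*t^2) with hdd
  have hd : d^2 = 1 - 4*t^2 := Real.sq_sqrt hd0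
  have hdn : 0 ≤ d := Real.sqrt_nonneg _
  rcases eq_or_lt_of_le ht2 with h | h
  · -- t = 1/2
    have : (1:ℝ)/2 ≤ y := by nlinarith
    have hd0' : d = 0 := by
      rw [hdd, Real.sqrt_eq_zero'.mpr (by nlinarith)]
    unfold yplus; rw [← hdd, hd0']; linarith
  · -- t < 1/2
    unfold yplus; rw [← hdd]
    by_contra hcon
    push_neg at hcon
    -- y < (1+d)/2; from hh: (2y-1)^2 ≥ d^2 so y ≤ (1-d)/2
    have h2 : (2*y-1)^2 ≥ d^2 := by nlinarith
    have h3 : y ≤ (1-d)/2 := by nlinarith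
    -- then t ≤ (1-d)/2
    have h4 : t ≤ (1-d)/2 := by nlinarith
    have h5 : d ≤ 1 - 2*t := by linarith
    nlinarith
-- backward direction helper: y ≥ yplus t implies t^2 + y^2 ≥ y
lemma horoball_of_yplus_le {t y : ℝ} (h : yplus t ≤ y) : y ≤ t^2 + y^2 := by
  rcases le_or_gt (1 - 4*t^2) 0 with hc | hc
  · have : (1:ℝ)/2 ≤ y := le_trans (yplus_half_le t) h
    nlinarith
  · have hd : (Real.sqrt (1-4*t^2))^2 = 1 - 4*t^2 := Real.sq_sqrt hc.le
    have hdn : 0 ≤ Real.sqrt (1-4*t^2) := Real.sqrt_nonneg _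
    unfold yplus at h
    nlinarith

lemma horoball_iff {x y : ℝ} (hx : 0 < x) (hx1 : x < 1) (hy : 0 < y) (hy1 : y ≤ 1)
    (hg : x - x^2 ≤ y^2) :
    (y ≤ x^2 + y^2 ∧ y ≤ (1-x)^2 + y^2) ↔ Yfun x ≤ y := by
  constructor
  · rintro ⟨h1, h2⟩
    have hg' : (1-x) - (1-x)^2 ≤ y^2 := by nlinarith
    rw [Yfun, max_le_iff]
    constructor
    · rcases le_or_gt x (1/2) with hc | hc
      · exact yplus_le_aux hx hc hy hy1 hg h1
      · -- yplus x = 1/2 and apply aux to 1-x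
        have h3 : yplus (1-x) ≤ y := yplus_le_aux (by linarith) (by linarith) hy hy1 hg' h2
        have : yplus x = 1/2 := by
          unfold yplus; rw [Real.sqrt_eq_zero'.mpr (by nlinarith)]; norm_num
        rw [this]; exact le_trans (yplus_half_le _) h3
    · rcases le_or_gt (1-x) (1/2) with hc | hc
      · exact yplus_le_aux (by linarith) hc hy hy1 hg' h2
      · have h3 : yplus x ≤ y := yplus_le_aux hx (by linarith) hy hy1 hg h1
        have : yplus (1-x) = 1/2 := by
          unfold yplus; rw [Real.sqrt_eq_zero'.mpr (by nlinarith)]; norm_num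
        rw [this]; exact le_trans (yplus_half_le _) h3
  · intro h
    rw [Yfun, max_le_iff] at h
    exact ⟨horoball_of_yplus_le h.1, by simpa using horoball_of_yplus_le h.2⟩

def sT : Set (ℝ×ℝ) := {p | 0 ≤ p.1 ∧ p.1 ≤ 1 ∧ 0 < p.2 ∧ 1/4 ≤ (p.1-1/2)^2 + p.2^2}
def sN : Set (ℝ×ℝ) := {p | p ∈ sT ∧ p.2 ≤ 1 ∧ 1/4 ≤ p.1^2+(p.2-1/2)^2 ∧ 1/4 ≤ (p.1-1)^2+(p.2-1/2)^2}

lemma half_le_abs (w : ℂ) : (1/2 : ℝ) ≤ ‖w‖ ↔ 1/4 ≤ w.re^2 + w.im^2 := by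
  rw [Complex.norm_def, Complex.normSq_apply]
  have h0 : (0:ℝ) ≤ w.re*w.re + w.im*w.im := by nlinarith
  constructor
  · intro h
    nlinarith [Real.sq_sqrt h0, Real.sqrt_nonneg (w.re*w.re + w.im*w.im)]
  · intro h
    nlinarith [Real.sq_sqrt h0, Real.sqrt_nonneg (w.re*w.re + w.im*w.im),
      Real.sqrt_le_sqrt (show w.re*w.re+w.im*w.im ≤ (Real.sqrt (w.re*w.re+w.im*w.im))^2 from (Real.sq_sqrt h0).ge)]

lemma mem_T (x y : ℝ) : ((⟨x,y⟩:ℂ) ∈ idealTriangle) ↔ (x,y) ∈ sT := by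
  simp only [idealTriangle, mem_setOf_eq, sT, half_le_abs]
  simp [Complex.div_re, Complex.div_im]

lemma mem_N (x y : ℝ) : ((⟨x,y⟩:ℂ) ∈ nonFoliatedRegion) ↔ (x,y) ∈ sN := by
  simp only [nonFoliatedRegion, mem_inter_iff, mem_setOf_eq, sN, half_le_abs, mem_T]
  simp [Complex.div_re, Complex.div_im, Complex.normSq_apply]
  tauto

lemma image_symm_eq (s : Set (ℝ×ℝ)) (S : Set ℂ)
    (h : ∀ x y : ℝ, ((⟨x,y⟩:ℂ) ∈ S ↔ (x,y) ∈ s)) :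
    Complex.measurableEquivRealProd.symm '' s = S := by
  ext z
  constructor
  · rintro ⟨p, hp, rfl⟩
    rw [Complex.measurableEquivRealProd_symm_apply]
    exact (h p.1 p.2).mpr hp
  · intro hz
    refine ⟨(z.re, z.im), (h z.re z.im).mp ?_, by simp [Complex.ext_iff]⟩
    convert hz

lemma master (s : Set (ℝ×ℝ)) (hs : MeasurableSet s) (S : Set ℂ)
    (h : ∀ x y : ℝ, ((⟨x,y⟩:ℂ) ∈ S ↔ (x,y) ∈ s)) :
    (∫ z in S, 1 / z.im ^ 2) =
      (∫⁻ x, ∫⁻ y in {y | (x,y) ∈ s}, ENNReal.ofReal (1/y^2)).toReal := by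
  have hmeas : Measurable fun p : ℝ × ℝ => 1 / p.2 ^ 2 :=
    measurable_const.div (measurable_snd.pow_const 2)
  have step1 : (∫ z in S, 1 / z.im ^ 2) = ∫ p in s, 1 / p.2 ^ 2 := by
    rw [← image_symm_eq s S h,
      (Complex.volume_preserving_equiv_real_prod.symm _).setIntegral_image_emb
        Complex.measurableEquivRealProd.symm.measurableEmbedding]
    simp
  rw [step1, MeasureTheory.integral_eq_lintegral_of_nonneg_ae (Filter.Eventually.of_forall
      (fun p => by positivity)) (hmeas.aestronglyMeasurable.restrict)]
  congr 1
  rw [← lintegral_indicator hs _, Measure.volume_eq_prod, lintegral_prod _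
      ((hmeas.ennreal_ofReal.indicator hs).aemeasurable)]
  congr 1
  ext x
  rw [show {y | (x,y) ∈ s} = Prod.mk x ⁻¹' s from rfl,
    ← lintegral_indicator (measurable_prodMk_left hs) _]
  refine lintegral_congr fun y => ?_
  by_cases hxy : (x, y) ∈ s <;> simp [Set.indicator_apply, Set.mem_preimage, hxy]


lemma integral_inv_sq {a b : ℝ} (ha : 0 < a) (hab : a ≤ b) :
    ∫ y in a..b, 1/y^2 = 1/a - 1/b := by
  have hb : 0 < b := lt_of_lt_of_le ha hab
  have h : ∀ y ∈ [[a, b]], (1:ℝ)/y^2 = y ^ (-2 : ℤ) := by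
    intro y hy
    rw [zpow_neg, zpow_two, pow_two, one_div]
  rw [integral_congr h, integral_zpow (Or.inr ⟨by norm_num, fun hc =>
    (by rw [Set.uIcc_of_le hab] at hc; linarith [hc.1] : False)⟩)]
  norm_num
  field_simp
  ring

lemma lint_Icc {a b : ℝ} (ha : 0 < a) (hab : a ≤ b) :
    ∫⁻ y in Icc a b, ENNReal.ofReal (1/y^2) = ENNReal.ofReal (1/a - 1/b) := by
  have hcont : ContinuousOn (fun y : ℝ => 1/y^2) (Icc a b) :=
    ContinuousOn.div continuousOn_const (continuousOn_pow 2)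
      (fun y hy => ne_of_gt (by nlinarith [hy.1]))
  have hint : IntegrableOn (fun y : ℝ => 1/y^2) (Icc a b) := hcont.integrableOn_Icc
  rw [← ofReal_integral_eq_lintegral_ofReal hint
    (Filter.Eventually.of_forall (fun y => by positivity))]
  congr 1
  rw [integral_Icc_eq_integral_Ioc, ← intervalIntegral.integral_of_le hab]
  exact integral_inv_sq ha hab

lemma lint_Ico {a b : ℝ} (ha : 0 < a) (hab : a ≤ b) :
    ∫⁻ y in Ico a b, ENNReal.ofReal (1/y^2) = ENNReal.ofReal (1/a - 1/b) := by
  rw [Measure.restrict_congr_set Ico_ae_eq_Icc]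
  exact lint_Icc ha hab

lemma lint_Ioi : ∫⁻ y in Ioi (1:ℝ), ENNReal.ofReal (1/y^2) = ENNReal.ofReal 1 := by
  have heq : ∀ y ∈ Ioi (1:ℝ), y ^ (-2:ℝ) = 1/y^2 := by
    intro y hy
    rw [show (-2:ℝ) = ((-2 : ℤ):ℝ) by norm_num, Real.rpow_intCast, zpow_neg, zpow_two,
      pow_two, one_div]
  have h1 : IntegrableOn (fun y : ℝ => y ^ (-2 : ℝ)) (Ioi 1) :=
    integrableOn_Ioi_rpow_of_lt (by norm_num) one_pos
  have hint : IntegrableOn (fun y : ℝ => 1/y^2) (Ioi 1) :=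
    h1.congr_fun heq measurableSet_Ioi
  rw [← ofReal_integral_eq_lintegral_ofReal hint
    (Filter.Eventually.of_forall (fun y => by positivity))]
  congr 1
  rw [setIntegral_congr_fun measurableSet_Ioi (fun y hy => (heq y hy).symm),
    integral_Ioi_rpow_of_lt (by norm_num) one_pos]
  norm_num



lemma continuous_yplus : Continuous yplus := by
  unfold yplus; fun_prop

lemma continuous_Yfun : Continuous Yfun := (continuous_yplus.max (continuous_yplus.comp (by fun_prop)))

lemma continuous_invY : Continuous fun x => 1 / Yfun x :=
  continuous_const.div continuous_Yfun (fun x => ne_of_gt (Yfun_pos x))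

-- antiderivative on [0, 1/2]
noncomputable def FF (x : ℝ) : ℝ := Real.arcsin (2*x) - 2*x/(1 + Real.sqrt (1 - 4*x^2))

lemma FF_cont : Continuous FF := by
  unfold FF
  apply Continuous.sub
  · exact Real.continuous_arcsin.comp (by fun_prop)
  · apply Continuous.div (by fun_prop) (by fun_prop)
    intro x
    have := Real.sqrt_nonneg (1 - 4*x^2)
    intro h; linarith

lemma FF_deriv {x : ℝ} (hx : 0 < x) (hx2 : x < 1/2) :
    HasDerivAt FF (2 / (1 + Real.sqrt (1 - 4*x^2))) x := by
  have hpos : (0:ℝ) < 1 - 4*x^2 := by nlinarith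
  set d := Real.sqrt (1 - 4*x^2) with hdd
  have hd2 : d^2 = 1 - 4*x^2 := Real.sq_sqrt hpos.le
  have hdpos : 0 < d := Real.sqrt_pos.mpr hpos
  have h2x : HasDerivAt (fun x : ℝ => 2*x) 2 x := by
    simpa using (hasDerivAt_id x).const_mul 2
  have harc : HasDerivAt (fun x : ℝ => Real.arcsin (2*x)) (1 / Real.sqrt (1 - (2*x)^2) * 2) x :=
    (Real.hasDerivAt_arcsin (by nlinarith) (by nlinarith)).comp x h2x
  have hinner : HasDerivAt (fun x : ℝ => 1 - 4*x^2) (-(8*x)) x := by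
    have h := ((hasDerivAt_pow 2 x).const_mul (4:ℝ)).const_sub 1
    refine h.congr_deriv ?_
    norm_num
    ring
  have hsq : HasDerivAt (fun x : ℝ => Real.sqrt (1 - 4*x^2)) (-(8*x) / (2*d)) x :=
    hinner.sqrt (by rw [← hdd] at *; nlinarith)
  have hden : HasDerivAt (fun x : ℝ => 1 + Real.sqrt (1 - 4*x^2)) (-(8*x) / (2*d)) x := by
    exact hsq.const_add 1
  have hq : HasDerivAt (fun x : ℝ => 2*x/(1 + Real.sqrt (1 - 4*x^2)))
      ((2 * (1+d) - 2*x * (-(8*x)/(2*d))) / (1+d)^2) x := by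
    exact h2x.div hden (by nlinarith)
  have := harc.sub hq
  refine this.congr_deriv ?_
  have h4 : Real.sqrt (1 - (2*x)^2) = d := by rw [hdd]; ring_nf
  rw [h4]
  field_simp
  nlinarith [sq_nonneg (1+d), sq_nonneg d]

lemma integral_invY_half : ∫ x in (0:ℝ)..(1/2), 1/Yfun x = Real.pi/2 - 1 := by
  have hcong : ∀ x ∈ [[(0:ℝ), 1/2]], 1/Yfun x = 2/(1 + Real.sqrt (1-4*x^2)) := by
    intro x hx
    rw [uIcc_of_le (by norm_num)] at hx
    rw [Yfun_eq_of_le_half hx.2]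
    unfold yplus
    rw [one_div_div]
  have hcont2 : Continuous fun x : ℝ => 2/(1 + Real.sqrt (1-4*x^2)) := by
    apply Continuous.div continuous_const (by fun_prop)
    intro x
    have := Real.sqrt_nonneg (1 - 4*x^2)
    intro h; linarith
  rw [integral_congr hcong,
    integral_eq_sub_of_hasDeriv_right_of_le (by norm_num) FF_cont.continuousOn
      (fun x hx => (FF_deriv hx.1 hx.2).hasDerivWithinAt)
      (hcont2.intervalIntegrable 0 (1/2))]
  unfold FF
  norm_num [Real.arcsin_one]

lemma integral_invY : ∫ x in Set.Ioo (0:ℝ) 1, 1/Yfun x = Real.pi - 2 := by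
  have hii : ∀ a b : ℝ, IntervalIntegrable (fun x => 1/Yfun x) volume a b :=
    fun a b => continuous_invY.intervalIntegrable a b
  have hsplit := integral_add_adjacent_intervals (a := (0:ℝ)) (b := 1/2) (c := 1)
    (hii 0 (1/2)) (hii (1/2) 1)
  have hRefl : ∫ x in (1/2:ℝ)..1, 1/Yfun x = ∫ x in (0:ℝ)..(1/2), 1/Yfun x := by
    have h1 : ∫ x in (1/2:ℝ)..1, 1/Yfun x = ∫ x in (1/2:ℝ)..1, (fun t => 1/Yfun t) (1 - x) :=
      integral_congr (fun x _ => by simp only []; rw [← Yfun_symm x])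
    rw [h1, integral_comp_sub_left (fun t => 1/Yfun t) 1]
    norm_num
  rw [← integral_Ioc_eq_integral_Ioo, ← intervalIntegral.integral_of_le (by norm_num : (0:ℝ) ≤ 1),
    ← hsplit, hRefl, integral_invY_half]
  ring

lemma sqrt_half_aux {u : ℝ} (hu : 0 < u) :
    (1:ℝ)/Real.sqrt (u/2) = Real.sqrt 2 * u^(-(1/2) : ℝ) := by
  have h1 : 0 < Real.sqrt u := Real.sqrt_pos.mpr hu
  have h2 : (0:ℝ) < Real.sqrt 2 := Real.sqrt_pos.mpr (by norm_num)
  rw [Real.sqrt_div hu.le, Real.rpow_neg hu.le, ← Real.sqrt_eq_rpow]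
  field_simp


lemma measurable_invg : Measurable fun x : ℝ => 1/gfun x := by
  unfold gfun; fun_prop

lemma intervalIntegrable_invg : IntervalIntegrable (fun x => 1/gfun x) volume 0 1 := by
  rw [intervalIntegrable_iff_integrableOn_Ioc_of_le (by norm_num)]
  rw [show Ioc (0:ℝ) 1 = Ioc 0 (1/2) ∪ Ioc (1/2) 1 from
    (Ioc_union_Ioc_eq_Ioc (by norm_num) (by norm_num)).symm]
  have base : IntervalIntegrable (fun x : ℝ => x ^ (-(1/2):ℝ)) volume 0 (1/2) :=
    intervalIntegral.intervalIntegrable_rpow' (by norm_num)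
  apply IntegrableOn.union
  · have hg : IntegrableOn (fun x : ℝ => Real.sqrt 2 * x^(-(1/2) : ℝ)) (Ioc 0 (1/2)) := by
      rw [← intervalIntegrable_iff_integrableOn_Ioc_of_le (by norm_num)]
      exact base.const_mul _
    apply Integrable.mono' hg measurable_invg.aestronglyMeasurable.restrict
    rw [ae_restrict_iff' measurableSet_Ioc]
    refine .of_forall fun x hx => ?_
    have hx0 : 0 < x := hx.1
    have hx2 : x ≤ 1/2 := hx.2
    have h1 : Real.sqrt (x/2) ≤ gfun x := Real.sqrt_le_sqrt (by nlinarith)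
    have h2 : 0 < Real.sqrt (x/2) := Real.sqrt_pos.mpr (by linarith)
    have h3 : 1/gfun x ≤ 1/Real.sqrt (x/2) := one_div_le_one_div_of_le h2 h1
    rw [Real.norm_eq_abs, abs_of_nonneg (one_div_nonneg.mpr (show (0:ℝ) ≤ gfun _ from Real.sqrt_nonneg _))]
    rw [← sqrt_half_aux hx0]; exact h3
  · have hg : IntegrableOn (fun x : ℝ => Real.sqrt 2 * (1-x)^(-(1/2) : ℝ)) (Ioc (1/2) 1) := by
      rw [← intervalIntegrable_iff_integrableOn_Ioc_of_le (by norm_num)]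
      have h := (base.comp_sub_left 1).symm
      norm_num at h
      exact h.const_mul _
    apply Integrable.mono' hg measurable_invg.aestronglyMeasurable.restrict
    rw [ae_restrict_iff' measurableSet_Ioc]
    refine .of_forall fun x hx => ?_
    have hx0 : 1/2 < x := hx.1
    have hx2 : x ≤ 1 := hx.2
    rw [Real.norm_eq_abs, abs_of_nonneg (one_div_nonneg.mpr (show (0:ℝ) ≤ gfun _ from Real.sqrt_nonneg _))]
    rcases eq_or_lt_of_le hx2 with h | h
    · subst h
      unfold gfun
      norm_num [Real.zero_rpow]
    · have h1 : Real.sqrt ((1-x)/2) ≤ gfun x := Real.sqrt_le_sqrt (by nlinarith)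
      have h2 : 0 < Real.sqrt ((1-x)/2) := Real.sqrt_pos.mpr (by linarith)
      have h3 : 1/gfun x ≤ 1/Real.sqrt ((1-x)/2) := one_div_le_one_div_of_le h2 h1
      rw [← sqrt_half_aux (by linarith : (0:ℝ) < 1-x)]; exact h3

lemma integral_invg : ∫ x in Set.Ioo (0:ℝ) 1, 1/gfun x = Real.pi := by
  rw [← integral_Ioc_eq_integral_Ioo, ← intervalIntegral.integral_of_le zero_le_one]
  have hderiv : ∀ x ∈ Set.Ioo (0:ℝ) 1,
      HasDerivAt (fun x : ℝ => Real.arcsin (2*x-1)) (1/gfun x) x := by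
    intro x hx
    have h2x : HasDerivAt (fun x : ℝ => 2*x-1) 2 x := by
      simpa using ((hasDerivAt_id x).const_mul 2).sub_const 1
    have harc : HasDerivAt (fun x : ℝ => Real.arcsin (2*x-1))
        (1 / Real.sqrt (1 - (2*x-1)^2) * 2) x :=
      (Real.hasDerivAt_arcsin (by nlinarith [hx.1, hx.2]) (by nlinarith [hx.1, hx.2])).comp x h2x
    convert harc using 1
    have hs : Real.sqrt (1 - (2*x-1)^2) = 2 * gfun x := by
      rw [show (1 - (2*x-1)^2) = 2^2*(x-x^2) by ring, Real.sqrt_mul (by positivity),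
        Real.sqrt_sq (by norm_num : (0:ℝ) ≤ 2)]
      rfl
    rw [hs]
    have : 0 < gfun x := Real.sqrt_pos.mpr (by nlinarith [hx.1, hx.2])
    field_simp
  rw [integral_eq_sub_of_hasDeriv_right_of_le zero_le_one
    (Real.continuous_arcsin.comp (by fun_prop)).continuousOn
    (fun x hx => (hderiv x hx).hasDerivWithinAt) intervalIntegrable_invg]
  norm_num [Real.arcsin_one, Real.arcsin_neg_one]

lemma meas_sT : MeasurableSet sT := by
  unfold sT
  simp only [Set.setOf_and]
  refine (MeasurableSet.inter ?_ (MeasurableSet.inter ?_ (MeasurableSet.inter ?_ ?_)))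
  · exact measurableSet_le measurable_const measurable_fst
  · exact measurableSet_le measurable_fst measurable_const
  · exact measurableSet_lt measurable_const measurable_snd
  · exact measurableSet_le measurable_const (by fun_prop)

lemma meas_sN : MeasurableSet sN := by
  unfold sN
  simp only [Set.setOf_and]
  refine MeasurableSet.inter meas_sT (MeasurableSet.inter ?_ (MeasurableSet.inter ?_ ?_))
  · exact measurableSet_le measurable_snd measurable_const
  · exact measurableSet_le measurable_const (by fun_prop)
  · exact measurableSet_le measurable_const (by fun_prop)

lemma slice_T {x : ℝ} (hx : x ∈ Ioo (0:ℝ) 1) : {y | (x,y) ∈ sT} = Ici (gfun x) := by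
  obtain ⟨hx0, hx1⟩ := hx
  ext y
  simp only [sT, mem_setOf_eq, mem_Ici]
  constructor
  · rintro ⟨-, -, hy, h4⟩
    calc gfun x = Real.sqrt (x - x^2) := rfl
    _ ≤ Real.sqrt (y^2) := Real.sqrt_le_sqrt (by nlinarith)
    _ = y := Real.sqrt_sq hy.le
  · intro h
    have hg : 0 < gfun x := gfun_pos hx0 hx1
    have hy : 0 < y := lt_of_lt_of_le hg h
    have h2 : x - x^2 ≤ y^2 := by
      have := Real.sq_sqrt (show (0:ℝ) ≤ x - x^2 by nlinarith)
      nlinarith [pow_le_pow_left₀ (Real.sqrt_nonneg (x-x^2)) h 2]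
    exact ⟨hx0.le, hx1.le, hy, by nlinarith⟩

lemma slice_N {x : ℝ} (hx : x ∈ Ioo (0:ℝ) 1) : {y | (x,y) ∈ sN} = Icc (Yfun x) 1 := by
  obtain ⟨hx0, hx1⟩ := hx
  ext y
  simp only [sN, sT, mem_setOf_eq, mem_Icc]
  constructor
  · rintro ⟨⟨-, -, hy, hgeo⟩, hy1, hh0, hh1⟩
    have hg : x - x^2 ≤ y^2 := by nlinarith
    refine ⟨(horoball_iff hx0 hx1 hy hy1 hg).mp ⟨by nlinarith, by nlinarith⟩, hy1⟩
  · rintro ⟨hY, hy1⟩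
    have h12 : (1:ℝ)/2 ≤ y := le_trans (Yfun_half_le x) hY
    have hy : 0 < y := by linarith
    have hg : x - x^2 ≤ y^2 := by nlinarith [sq_nonneg (2*x-1), sq_nonneg (2*y-1)]
    have := (horoball_iff hx0 hx1 hy hy1 hg).mpr hY
    exact ⟨⟨hx0.le, hx1.le, hy, by nlinarith⟩, hy1, by nlinarith [this.1], by nlinarith [this.2]⟩

lemma slice_D {x : ℝ} (hx : x ∈ Ioo (0:ℝ) 1) :
    {y | (x,y) ∈ sT \ sN} = Ico (gfun x) (Yfun x) ∪ Ioi 1 := by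
  have hsub : {y | (x,y) ∈ sT \ sN} = {y | (x,y) ∈ sT} \ {y | (x,y) ∈ sN} := rfl
  rw [hsub, slice_T hx, slice_N hx]
  ext y
  simp only [mem_diff, mem_Ici, mem_Icc, mem_union, mem_Ico, mem_Ioi, not_and, not_le]
  have h1 := gfun_le_Yfun x
  have h2 := Yfun_le_one x
  have h3 : gfun x ≤ 1 := le_trans gfun_le_half (by norm_num)
  constructor
  · rintro ⟨hg, h⟩
    rcases le_or_gt y 1 with hy1 | hy1
    · exact Or.inl ⟨hg, lt_of_not_ge fun hc => absurd (h hc) (not_lt.mpr hy1)⟩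
    · exact Or.inr hy1
  · rintro (⟨hg, hY⟩ | hy1)
    · exact ⟨hg, fun hc => absurd hY (not_lt.mpr hc)⟩
    · exact ⟨by linarith, fun hc => by linarith⟩

lemma slice_T_empty {x : ℝ} (hx : x ∉ Icc (0:ℝ) 1) (y : ℝ) : (x,y) ∉ sT := by
  rw [mem_Icc, not_and_or] at hx
  intro h
  rcases hx with h0 | h1
  · exact h0 h.1
  · exact h1 h.2.1

lemma ae_ne01 : ∀ᵐ x : ℝ, x ≠ 0 ∧ x ≠ 1 := by
  have h0 : ∀ᵐ x : ℝ, x ∉ ({0} : Set ℝ) :=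
    measure_eq_zero_iff_ae_notMem.mp Real.volume_singleton
  have h1 : ∀ᵐ x : ℝ, x ∉ ({1} : Set ℝ) :=
    measure_eq_zero_iff_ae_notMem.mp Real.volume_singleton
  filter_upwards [h0, h1] with x hx0 hx1
  simpa using And.intro hx0 hx1

lemma not_mem_Icc_of {x : ℝ} (hx01 : x ∉ Ioo (0:ℝ) 1) (h0 : x ≠ 0) (h1 : x ≠ 1) :
    x ∉ Icc (0:ℝ) 1 := fun h =>
  hx01 ⟨lt_of_le_of_ne h.1 (Ne.symm h0), lt_of_le_of_ne h.2 h1⟩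

lemma invY_integrableOn : IntegrableOn (fun x => 1/Yfun x) (Ioo (0:ℝ) 1) :=
  (continuous_invY.integrableOn_Icc).mono_set Ioo_subset_Icc_self

lemma invg_integrableOn : IntegrableOn (fun x => 1/gfun x) (Ioo (0:ℝ) 1) := by
  have h := intervalIntegrable_invg
  rw [intervalIntegrable_iff_integrableOn_Ioc_of_le zero_le_one] at h
  exact h.mono_set Ioo_subset_Ioc_self

lemma const_integrableOn : IntegrableOn (fun _ : ℝ => (1:ℝ)) (Ioo (0:ℝ) 1) := by
  apply (integrableOn_const_iff (C := (1:ℝ))).mpr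
  right
  rw [Real.volume_Ioo]
  norm_num

lemma integral_one_Ioo : ∫ _ in Ioo (0:ℝ) 1, (1:ℝ) = 1 := by
  simp [Real.volume_Ioo]

/-- The non-foliated region of the ideal triangle with
vertices `0`, `1`, `∞` has hyperbolic area `π - 3`; equivalently, the foliated
part of the ideal triangle (the union of its three spikes, each bounded by a
horocyclic arc of length `1`) has hyperbolic area `3`. -/
theorem nonFoliatedRegion_area :
    (∫ z in nonFoliatedRegion, 1 / z.im ^ 2) = Real.pi - 3 ∧
    (∫ z in idealTriangle \ nonFoliatedRegion, 1 / z.im ^ 2) = 3 := by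
  constructor
  · rw [master sN meas_sN _ (fun x y => mem_N x y)]
    have hae : (fun x => ∫⁻ y in {y | (x,y) ∈ sN}, ENNReal.ofReal (1/y^2)) =ᵐ[volume]
        fun x => ENNReal.ofReal ((Ioo (0:ℝ) 1).indicator (fun x => 1/Yfun x - 1) x) := by
      filter_upwards [ae_ne01] with x hx
      by_cases hx01 : x ∈ Ioo (0:ℝ) 1
      · rw [slice_N hx01, lint_Icc (Yfun_pos x) (Yfun_le_one x), indicator_of_mem hx01]
        norm_num
      · have hempty : {y | (x,y) ∈ sN} = ∅ :=
          eq_empty_iff_forall_notMem.mpr fun y hy =>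
            slice_T_empty (not_mem_Icc_of hx01 hx.1 hx.2) y hy.1
        rw [hempty, indicator_of_notMem hx01]
        simp
    have hInt : Integrable ((Ioo (0:ℝ) 1).indicator fun x => 1/Yfun x - 1) :=
      (integrable_indicator_iff measurableSet_Ioo).mpr (invY_integrableOn.sub const_integrableOn)
    have hNonneg : 0 ≤ᵐ[volume] ((Ioo (0:ℝ) 1).indicator fun x => 1/Yfun x - 1) := by
      refine .of_forall fun x => indicator_nonneg (fun t ht => ?_) x
      have h1 : 1 ≤ 1/Yfun t := by
        rw [le_one_div (by norm_num) (Yfun_pos t)]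
        simpa using Yfun_le_one t
      linarith
    rw [lintegral_congr_ae hae, ← ofReal_integral_eq_lintegral_ofReal hInt hNonneg,
      ENNReal.toReal_ofReal]
    · rw [MeasureTheory.integral_indicator measurableSet_Ioo,
        integral_sub invY_integrableOn const_integrableOn, integral_invY, integral_one_Ioo]
      ring
    · rw [MeasureTheory.integral_indicator measurableSet_Ioo,
        integral_sub invY_integrableOn const_integrableOn, integral_invY, integral_one_Ioo]
      nlinarith [Real.pi_gt_three]
  · rw [master (sT \ sN) (meas_sT.diff meas_sN) _ (fun x y => by
      simpa [Set.mem_diff] using and_congr (mem_T x y) (not_congr (mem_N x y)))]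
    have hae : (fun x => ∫⁻ y in {y | (x,y) ∈ sT \ sN}, ENNReal.ofReal (1/y^2)) =ᵐ[volume]
        fun x => ENNReal.ofReal
          ((Ioo (0:ℝ) 1).indicator (fun x => 1/gfun x - 1/Yfun x + 1) x) := by
      filter_upwards [ae_ne01] with x hx
      by_cases hx01 : x ∈ Ioo (0:ℝ) 1
      · have hg0 : 0 < gfun x := gfun_pos hx01.1 hx01.2
        have hnn1 : 0 ≤ 1/gfun x - 1/Yfun x :=
          sub_nonneg.mpr (one_div_le_one_div_of_le hg0 (gfun_le_Yfun x))
        have hdisj : Disjoint (Ico (gfun x) (Yfun x)) (Ioi (1:ℝ)) := by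
          rw [Set.disjoint_left]
          rintro y ⟨-, h2⟩ h3
          exact absurd (lt_of_lt_of_le h2 (Yfun_le_one x)) (not_lt.mpr (le_of_lt h3))
        rw [slice_D hx01, lintegral_union measurableSet_Ioi hdisj,
          lint_Ico hg0 (gfun_le_Yfun x), lint_Ioi,
          ← ENNReal.ofReal_add hnn1 zero_le_one, indicator_of_mem hx01]
      · have hempty : {y | (x,y) ∈ sT \ sN} = ∅ :=
          eq_empty_iff_forall_notMem.mpr fun y hy =>
            slice_T_empty (not_mem_Icc_of hx01 hx.1 hx.2) y hy.1
        rw [hempty, indicator_of_notMem hx01]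
        simp
    have hsubInt : IntegrableOn (fun x => 1/gfun x - 1/Yfun x) (Ioo (0:ℝ) 1) := by
      exact invg_integrableOn.sub invY_integrableOn
    have hIntOn : IntegrableOn (fun x => 1/gfun x - 1/Yfun x + 1) (Ioo (0:ℝ) 1) := by
      exact hsubInt.add const_integrableOn
    have hInt : Integrable ((Ioo (0:ℝ) 1).indicator fun x => 1/gfun x - 1/Yfun x + 1) :=
      (integrable_indicator_iff measurableSet_Ioo).mpr hIntOn
    have hNonneg : 0 ≤ᵐ[volume]
        ((Ioo (0:ℝ) 1).indicator fun x => 1/gfun x - 1/Yfun x + 1) := by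
      refine .of_forall fun x => indicator_nonneg (fun t ht => ?_) x
      have hg0 : 0 < gfun t := gfun_pos ht.1 ht.2
      have := one_div_le_one_div_of_le hg0 (gfun_le_Yfun t)
      linarith
    have hval : ∫ x, ((Ioo (0:ℝ) 1).indicator fun x => 1/gfun x - 1/Yfun x + 1) x = 3 := by
      rw [MeasureTheory.integral_indicator measurableSet_Ioo,
        integral_add hsubInt const_integrableOn,
        integral_sub invg_integrableOn invY_integrableOn, integral_invg, integral_invY,
        integral_one_Ioo]
      ring
    rw [lintegral_congr_ae hae, ← ofReal_integral_eq_lintegral_ofReal hInt hNonneg, hval,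
      ENNReal.toReal_ofReal (by norm_num)]
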